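/- Let J ⊂ ℝ be an open bounded interval. Then there exists a constant C = C(J) > 0 such that ‖u‖_{H¹(J)} ≤ C·( ‖u‖_{L²(J)}^{1/3} · |u'|_{H^{1/2}(J)}^{2/3} + ‖u‖_{L²(J)} ) for all u ∈ H^{3/2}(J). -/

import Mathlib

/-!
For `x` in a window `[a, a + h] ⊆ (A, B)` one has
`h u'(x) = u(a + h) - u(a) + ∫ₐ^{a+h} (u'(x) - u'(y)) dy`, and Cauchy–Schwarz with `|x - y| ≤ h`
bounds the square of the last integral by `h³ ∫ |u'(x) - u'(y)|² / |x - y|² dy`. Taking windows to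
the right of `x` on `(A, B - h)` and to its left on `[B - h, B)` and integrating in `x` gives
`‖u'‖²_{L²} ≤ 12 h⁻² ‖u‖²_{L²} + 6 h |u'|²_{H^{1/2}}` for `0 < h < (B - A) / 2`, and
`h = min ((‖u‖²_{L²} / |u'|²_{H^{1/2}})^{1/3}) ((B - A) / 3)` balances the two terms.
-/

open MeasureTheory Set Filter Topology ENNReal

noncomputable section

/-- Squared Gagliardo `H^{1/2}` seminorm of `g` over the set `s ⊆ ℝ`. -/
def halfSemi (g : ℝ → ℝ) (s : Set ℝ) : ℝ≥0∞ :=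
  ∫⁻ p in s ×ˢ s, ENNReal.ofReal ((g p.1 - g p.2) ^ 2 / (p.1 - p.2) ^ 2)

/-- `f ∈ H²_loc(ℝ)`, encoded through a concrete derivative `f'` and a second
derivative `f''` which is the (locally integrable) a.e. derivative of `f'`. -/
def IsH2Profile (f f' f'' : ℝ → ℝ) : Prop :=
  (∀ t : ℝ, HasDerivAt f (f' t) t) ∧
  (∀ s t : ℝ, IntervalIntegrable f'' volume s t) ∧
  (∀ s t : ℝ, f' t - f' s = ∫ x in s..t, f'' x)

/-- `f ∈ H²_loc` on the set `s`. -/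
def IsH2ProfileOn (s : Set ℝ) (f f' f'' : ℝ → ℝ) : Prop :=
  (∀ t ∈ s, HasDerivAt f (f' t) t) ∧
  (∀ r ∈ s, ∀ t ∈ s, IntervalIntegrable f'' volume r t ∧ f' t - f' r = ∫ x in r..t, f'' x)

/-- `f` locally absolutely continuous with derivative `f'` (the `H^{3/2}_loc` model:
`f'` is the a.e. derivative of `f`). -/
def IsACProfile (f f' : ℝ → ℝ) : Prop :=
  (∀ s t : ℝ, IntervalIntegrable f' volume s t) ∧
  (∀ s t : ℝ, f t - f s = ∫ x in s..t, f' x)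

/-- The optimal interior transition energy `m`. -/
def mConst (W : ℝ → ℝ) (a b : ℝ) : ℝ :=
  sInf {e : ℝ | ∃ (f f' f'' : ℝ → ℝ) (R : ℝ), 0 < R ∧ IsH2Profile f f' f'' ∧
    (∀ t : ℝ, R ≤ t → f (-t) = a ∧ f t = b) ∧
    (∫⁻ t in Ioo (-R) R, ENNReal.ofReal (W (f t) + f'' t ^ 2)) ≠ ⊤ ∧
    e = (∫⁻ t in Ioo (-R) R, ENNReal.ofReal (W (f t) + f'' t ^ 2)).toReal}

/-- The optimal boundary/interior interaction energy `σ(z, ξ)`. -/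
def sigmaConst (W : ℝ → ℝ) (z ξ : ℝ) : ℝ :=
  sInf {e : ℝ | ∃ (f f' f'' : ℝ → ℝ) (R : ℝ), 0 < R ∧
    IsH2ProfileOn (Ioi 0) f f' f'' ∧
    ContinuousWithinAt f (Ici 0) 0 ∧ f 0 = ξ ∧
    (∀ t : ℝ, R ≤ t → f t = z) ∧
    (∫⁻ t in Ioo 0 R, ENNReal.ofReal (W (f t) + f'' t ^ 2)) ≠ ⊤ ∧
    e = (∫⁻ t in Ioo 0 R, ENNReal.ofReal (W (f t) + f'' t ^ 2)).toReal}

/-- Admissible class for the lower boundary-transition constant `c̲`. -/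
def cLowSet (V : ℝ → ℝ) (α β : ℝ) : Set ℝ :=
  {e : ℝ | ∃ (f f' : ℝ → ℝ) (R : ℝ), 0 < R ∧ IsACProfile f f' ∧
    halfSemi f' univ ≠ ⊤ ∧
    (∀ t : ℝ, R ≤ t → f (-t) = α ∧ f t = β) ∧
    e = (1 / 8) * (halfSemi f' (Ioo (-R) R)).toReal + ∫ x in Ioo (-R) R, V (f x)}

/-- The lower boundary-transition constant `c̲`. -/
def cLow (V : ℝ → ℝ) (α β : ℝ) : ℝ := sInf (cLowSet V α β)

/-- Admissible class for the upper boundary-transition constant `c̄`. -/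
def cUpSet (V : ℝ → ℝ) (α β : ℝ) : Set ℝ :=
  {e : ℝ | ∃ (f f' : ℝ → ℝ) (R : ℝ), 0 < R ∧ IsACProfile f f' ∧
    halfSemi f' univ ≠ ⊤ ∧
    (∀ t : ℝ, R ≤ t → f (-t) = α ∧ f t = β) ∧
    e = (7 / 16) * (halfSemi f' univ).toReal + ∫ x, V (f x)}

/-- The upper boundary-transition constant `c̄`. -/
def cUp (V : ℝ → ℝ) (α β : ℝ) : ℝ := sInf (cUpSet V α β)

/-- Hypotheses (H^W) on the interior double-well potential. -/
def HypW (W : ℝ → ℝ) (a b : ℝ) : Prop :=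
  Continuous W ∧ (∀ z, 0 ≤ W z) ∧ a < b ∧ (∀ z, W z = 0 ↔ z = a ∨ z = b) ∧
  ∃ C > (0:ℝ), ∀ z : ℝ, C * |z| ^ 2 - 1 / C ≤ W z

/-- Hypotheses (H^V) on the boundary double-well potential. -/
def HypV (V : ℝ → ℝ) (α β : ℝ) : Prop :=
  Continuous V ∧ (∀ z, 0 ≤ V z) ∧ α < β ∧ (∀ z, V z = 0 ↔ z = α ∨ z = β) ∧
  (∃ C > (0:ℝ), ∀ z : ℝ, C * |z| ^ 2 - 1 / C ≤ V z) ∧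
  ∃ C > (0:ℝ), ∃ ρ > (0:ℝ), ∀ z : ℝ,
    z ∈ Ioo (α - ρ) (α + ρ) ∪ Ioo (β - ρ) (β + ρ) →
      (1 / C) * min |z - α| |z - β| ^ 2 ≤ V z


/-- The one-dimensional interior energy `F_ε(u; I)` on the `H²` class
(written with lower integrals of the nonnegative integrands). -/
def F1D (W : ℝ → ℝ) (ε : ℝ) (u u'' : ℝ → ℝ) (I : Set ℝ) : ℝ≥0∞ :=
  ENNReal.ofReal (ε ^ 3) * ∫⁻ x in I, ENNReal.ofReal (u'' x ^ 2)
  + ENNReal.ofReal (1 / ε) * ∫⁻ x in I, ENNReal.ofReal (W (u x))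

/-- The one-dimensional boundary energy `G_ε(v; J)` on the `H^{3/2}` class. -/
def G1D (V : ℝ → ℝ) (ε lam : ℝ) (v v' : ℝ → ℝ) (J : Set ℝ) : ℝ≥0∞ :=
  ENNReal.ofReal (ε ^ 3 / 8) * halfSemi v' J
  + ENNReal.ofReal lam * ∫⁻ x in J, ENNReal.ofReal (V (v x))

/-- `u ∈ H²(I)`: `u` is differentiable on `I` with derivative `u'`, and `u'` is
absolutely continuous on `I` with a.e. derivative `u''`. -/
def IsH2On (I : Set ℝ) (u u' u'' : ℝ → ℝ) : Prop :=
  (∀ x ∈ I, HasDerivAt u (u' x) x) ∧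
  (∀ s ∈ I, ∀ t ∈ I, IntervalIntegrable u'' volume s t ∧
    u' t - u' s = ∫ x in s..t, u'' x)

/-- `v ∈ H^{3/2}(J)`: `v` is absolutely continuous on `J` with a.e. derivative `v'`,
and `v'` has finite `H^{1/2}(J)` seminorm. -/
def IsH32On (J : Set ℝ) (v v' : ℝ → ℝ) : Prop :=
  (∀ s ∈ J, ∀ t ∈ J, IntervalIntegrable v' volume s t ∧
    v t - v s = ∫ x in s..t, v' x) ∧
  halfSemi v' J ≠ ⊤

/-- `u ∈ BV(I; {c₀, c₁})`: `u` takes only the two values `c₀, c₁` on `I` and is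
locally constant on `I` off a finite set. -/
def BVtwo (I : Set ℝ) (c₀ c₁ : ℝ) (u : ℝ → ℝ) : Prop :=
  (∀ x ∈ I, u x = c₀ ∨ u x = c₁) ∧
  ∃ S : Finset ℝ, ∀ x ∈ I, x ∉ S → ∃ δ > 0, ∀ y ∈ I, |y - x| < δ → u y = u x


theorem ENNReal.sq_lintegral_le_measure_univ_mul {α : Type*} [MeasurableSpace α]
    {μ : Measure α} {f : α → ℝ≥0∞} (hf : AEMeasurable f μ) :
    (∫⁻ a, f a ∂μ) ^ 2 ≤ μ univ * ∫⁻ a, f a ^ 2 ∂μ := by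
  have h := ENNReal.lintegral_mul_norm_pow_le (hf.pow_const 2) aemeasurable_const
    (p := 1 / 2) (q := 1 / 2) (by norm_num) (by norm_num) (by norm_num) (μ := μ) (g := fun _ => 1)
  have hf2 : ∀ a, (f a ^ 2) ^ (1 / 2 : ℝ) = f a := fun a => by
    rw [← ENNReal.rpow_natCast, ← ENNReal.rpow_mul]; norm_num
  simp only [hf2, ENNReal.one_rpow, mul_one, lintegral_const, one_mul] at h
  rw [← ENNReal.mul_rpow_of_nonneg _ _ (by norm_num), one_div,
    ENNReal.le_rpow_inv_iff (by norm_num)] at h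
  simpa [mul_comm] using h

theorem ofReal_sq_integral_le_measure_univ_mul {α : Type*} [MeasurableSpace α]
    {μ : Measure α} {g : α → ℝ} (hg : AEMeasurable g μ) :
    ENNReal.ofReal ((∫ a, g a ∂μ) ^ 2) ≤ μ univ * ∫⁻ a, ENNReal.ofReal (g a ^ 2) ∂μ := by
  have hsq : ∀ r : ℝ, ENNReal.ofReal (r ^ 2) = ‖r‖ₑ ^ 2 := fun r => by
    rw [Real.enorm_eq_ofReal_abs, ← ENNReal.ofReal_pow (abs_nonneg r), sq_abs]
  simp only [hsq]
  calc ‖∫ a, g a ∂μ‖ₑ ^ 2 ≤ (∫⁻ a, ‖g a‖ₑ ∂μ) ^ 2 := by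
        gcongr; exact enorm_integral_le_lintegral_enorm g
    _ ≤ μ univ * ∫⁻ a, ‖g a‖ₑ ^ 2 ∂μ :=
        ENNReal.sq_lintegral_le_measure_univ_mul hg.enorm

theorem setLIntegral_comp_add_right_le {f : ℝ → ℝ≥0∞} {s t : Set ℝ} {c : ℝ}
    (hst : MapsTo (· + c) s t) : ∫⁻ x in s, f (x + c) ≤ ∫⁻ y in t, f y :=
  (lintegral_mono_set hst.subset_preimage).trans_eq
    ((measurePreserving_add_right volume c).setLIntegral_comp_preimage_emb
      (measurableEmbedding_addRight c) f t)

theorem AEMeasurable.comp_add_right_of_mapsTo {β : Type*} [MeasurableSpace β] {f : ℝ → β}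
    {s t : Set ℝ} {c : ℝ} (hf : AEMeasurable f (volume.restrict t)) (hst : MapsTo (· + c) s t) :
    AEMeasurable (fun x => f (x + c)) (volume.restrict s) :=
  (hf.comp_quasiMeasurePreserving ((measurePreserving_add_right volume c).restrict_preimage_emb
    (measurableEmbedding_addRight c) t).quasiMeasurePreserving).mono_measure
    (Measure.restrict_mono hst.subset_preimage le_rfl)

theorem halfSemi_eq_lintegral_lintegral {g : ℝ → ℝ} {J : Set ℝ}
    (hg : AEMeasurable g (volume.restrict J)) :
    halfSemi g J = ∫⁻ x in J, ∫⁻ y in J, ENNReal.ofReal ((g x - g y) ^ 2 / (x - y) ^ 2) := by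
  have hg₁ := hg.comp_quasiMeasurePreserving
    (Measure.quasiMeasurePreserving_fst (μ := volume.restrict J) (ν := volume.restrict J))
  have hg₂ := hg.comp_quasiMeasurePreserving
    (Measure.quasiMeasurePreserving_snd (μ := volume.restrict J) (ν := volume.restrict J))
  rw [halfSemi, Measure.volume_eq_prod, ← Measure.prod_restrict]
  exact lintegral_prod _ (((hg₁.sub hg₂).pow_const 2).div
    ((measurable_fst.sub measurable_snd).pow_const 2).aemeasurable).ennreal_ofReal

theorem ofReal_sq_le_of_window {u u' : ℝ → ℝ} {a h x : ℝ} (hh : 0 < h) (hx : x ∈ Icc a (a + h))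
    (hi : IntervalIntegrable u' volume a (a + h)) (hftc : u (a + h) - u a = ∫ y in a..a + h, u' y) :
    ENNReal.ofReal (u' x ^ 2)
      ≤ ENNReal.ofReal (3 / h ^ 2) * (ENNReal.ofReal (u a ^ 2) + ENNReal.ofReal (u (a + h) ^ 2))
        + ENNReal.ofReal (3 * h) *
          ∫⁻ y in Ioo a (a + h), ENNReal.ofReal ((u' x - u' y) ^ 2 / (x - y) ^ 2) := by
  have hc : h * u' x = (∫ y in Ioo a (a + h), (u' x - u' y)) + (u (a + h) - u a) := by
    rw [hftc, ← integral_Ioc_eq_integral_Ioo, ← intervalIntegral.integral_of_le (by linarith),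
      intervalIntegral.integral_sub intervalIntegrable_const hi, intervalIntegral.integral_const,
      smul_eq_mul]
    ring
  set c := ∫ y in Ioo a (a + h), (u' x - u' y)
  have hreal : u' x ^ 2 ≤ 3 / h ^ 2 * (u a ^ 2 + u (a + h) ^ 2) + 3 / h ^ 2 * c ^ 2 := by
    rw [div_mul_eq_mul_div, div_mul_eq_mul_div, ← add_div, le_div_iff₀ (by positivity)]
    have hsq : (h * u' x) ^ 2 ≤ 3 * (u a ^ 2 + u (a + h) ^ 2) + 3 * c ^ 2 := by
      rw [hc]
      nlinarith [sq_nonneg (c - u (a + h)), sq_nonneg (c + u a), sq_nonneg (u (a + h) + u a)]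
    linarith [mul_pow h (u' x) 2]
  have hcs : ENNReal.ofReal (c ^ 2)
      ≤ ENNReal.ofReal h * ∫⁻ y in Ioo a (a + h), ENNReal.ofReal ((u' x - u' y) ^ 2) := by
    have hm : AEMeasurable u' (volume.restrict (Ioo a (a + h))) :=
      (hi.1.mono_set Ioo_subset_Ioc_self).aemeasurable
    simpa [Real.volume_Ioo] using
      ofReal_sq_integral_le_measure_univ_mul (aemeasurable_const.sub hm) (g := fun y => u' x - u' y)
  have hdom : ∫⁻ y in Ioo a (a + h), ENNReal.ofReal ((u' x - u' y) ^ 2)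
      ≤ ENNReal.ofReal (h ^ 2) *
        ∫⁻ y in Ioo a (a + h), ENNReal.ofReal ((u' x - u' y) ^ 2 / (x - y) ^ 2) := by
    rw [← lintegral_const_mul' _ _ ENNReal.ofReal_ne_top]
    refine setLIntegral_mono' measurableSet_Ioo fun y hy => ?_
    rw [← ENNReal.ofReal_mul (by positivity)]
    refine ENNReal.ofReal_le_ofReal ?_
    rcases eq_or_ne x y with rfl | hxy
    · simp
    · have hxy2 : 0 < (x - y) ^ 2 := by positivity
      have hdist : (x - y) ^ 2 ≤ h ^ 2 := by nlinarith [hx.1, hx.2, hy.1, hy.2]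
      rw [mul_div_assoc', le_div_iff₀ hxy2]
      nlinarith [sq_nonneg (u' x - u' y)]
  calc ENNReal.ofReal (u' x ^ 2)
      ≤ ENNReal.ofReal (3 / h ^ 2) * (ENNReal.ofReal (u a ^ 2) + ENNReal.ofReal (u (a + h) ^ 2))
        + ENNReal.ofReal (3 / h ^ 2) * ENNReal.ofReal (c ^ 2) := by
        grw [ENNReal.ofReal_le_ofReal hreal]
        rw [ENNReal.ofReal_add (by positivity) (by positivity), ENNReal.ofReal_mul (by positivity),
          ENNReal.ofReal_mul (by positivity), ENNReal.ofReal_add (by positivity) (by positivity)]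
    _ ≤ ENNReal.ofReal (3 / h ^ 2) * (ENNReal.ofReal (u a ^ 2) + ENNReal.ofReal (u (a + h) ^ 2))
        + ENNReal.ofReal (3 / h ^ 2) * (ENNReal.ofReal h * (ENNReal.ofReal (h ^ 2) *
          ∫⁻ y in Ioo a (a + h), ENNReal.ofReal ((u' x - u' y) ^ 2 / (x - y) ^ 2))) := by
        grw [hcs, hdom]
    _ = _ := by
        rw [← mul_assoc, ← mul_assoc, ← ENNReal.ofReal_mul (by positivity),
          ← ENNReal.ofReal_mul (by positivity), show 3 / h ^ 2 * h * h ^ 2 = 3 * h by field_simp]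

def IsPrimitiveOn (J : Set ℝ) (u u' : ℝ → ℝ) : Prop :=
  ∀ s ∈ J, ∀ t ∈ J, IntervalIntegrable u' volume s t ∧ u t - u s = ∫ x in s..t, u' x

theorem lintegral_sq_deriv_le_of_windows {A B c h : ℝ} {s : Set ℝ} {u u' : ℝ → ℝ}
    (hu : IsPrimitiveOn (Ioo A B) u u') (hum : AEMeasurable u (volume.restrict (Ioo A B)))
    (hu'm : AEMeasurable u' (volume.restrict (Ioo A B))) (hh : 0 < h) (hc : c ∈ Icc (-h) 0)
    (hs : MeasurableSet s) (hl : MapsTo (· + c) s (Ioo A B))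
    (hr : MapsTo (· + (c + h)) s (Ioo A B)) :
    ∫⁻ x in s, ENNReal.ofReal (u' x ^ 2)
      ≤ ENNReal.ofReal (6 / h ^ 2) * (∫⁻ x in Ioo A B, ENNReal.ofReal (u x ^ 2))
        + ENNReal.ofReal (3 * h) * halfSemi u' (Ioo A B) := by
  set F : ℝ → ℝ → ℝ≥0∞ := fun x y => ENNReal.ofReal ((u' x - u' y) ^ 2 / (x - y) ^ 2)
  have hwin : ∀ x ∈ s, Ioo (x + c) (x + c + h) ⊆ Ioo A B := fun x hx =>
    Ioo_subset_Ioo (hl hx).1.le (by rw [add_assoc]; exact (hr hx).2.le)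
  have hsJ : s ⊆ Ioo A B := fun x hx =>
    ⟨(hl hx).1.trans_le (by linarith [hc.2]), lt_of_le_of_lt (by linarith [hc.1]) (hr hx).2⟩
  have hpt : ∀ x ∈ s, ENNReal.ofReal (u' x ^ 2)
      ≤ ENNReal.ofReal (3 / h ^ 2) *
          (ENNReal.ofReal (u (x + c) ^ 2) + ENNReal.ofReal (u (x + (c + h)) ^ 2))
        + ENNReal.ofReal (3 * h) * ∫⁻ y in Ioo (x + c) (x + c + h), F x y := by
    intro x hx
    obtain ⟨hi, hftc⟩ := hu _ (hl hx) _ (hr hx)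
    dsimp only at hi hftc
    rw [← add_assoc] at hi hftc ⊢
    exact ofReal_sq_le_of_window hh ⟨by linarith [hc.2], by linarith [hc.1]⟩ hi hftc
  have hm : AEMeasurable (fun x => ENNReal.ofReal (u (x + c) ^ 2)) (volume.restrict s) :=
    ((hum.comp_add_right_of_mapsTo hl).pow_const 2).ennreal_ofReal
  have hm' : AEMeasurable (fun x => ENNReal.ofReal (u (x + (c + h)) ^ 2)) (volume.restrict s) :=
    ((hum.comp_add_right_of_mapsTo hr).pow_const 2).ennreal_ofReal
  have hQ : ∫⁻ x in s, ∫⁻ y in Ioo (x + c) (x + c + h), F x y ≤ halfSemi u' (Ioo A B) := by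
    rw [halfSemi_eq_lintegral_lintegral hu'm]
    exact (setLIntegral_mono' hs fun x hx => lintegral_mono_set (hwin x hx)).trans
      (lintegral_mono_set hsJ)
  calc ∫⁻ x in s, ENNReal.ofReal (u' x ^ 2)
      ≤ ∫⁻ x in s, (ENNReal.ofReal (3 / h ^ 2) *
            (ENNReal.ofReal (u (x + c) ^ 2) + ENNReal.ofReal (u (x + (c + h)) ^ 2))
          + ENNReal.ofReal (3 * h) * ∫⁻ y in Ioo (x + c) (x + c + h), F x y) :=
        setLIntegral_mono' hs hpt
    _ = ENNReal.ofReal (3 / h ^ 2) * ((∫⁻ x in s, ENNReal.ofReal (u (x + c) ^ 2))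
            + ∫⁻ x in s, ENNReal.ofReal (u (x + (c + h)) ^ 2))
          + ENNReal.ofReal (3 * h) * ∫⁻ x in s, ∫⁻ y in Ioo (x + c) (x + c + h), F x y := by
        rw [lintegral_add_left' (f := fun x => ENNReal.ofReal (3 / h ^ 2) *
            (ENNReal.ofReal (u (x + c) ^ 2) + ENNReal.ofReal (u (x + (c + h)) ^ 2)))
            ((hm.add hm').const_mul _), lintegral_const_mul' _ _
          ENNReal.ofReal_ne_top, lintegral_add_left' hm, lintegral_const_mul' _ _
          ENNReal.ofReal_ne_top]
    _ ≤ ENNReal.ofReal (3 / h ^ 2) * ((∫⁻ x in Ioo A B, ENNReal.ofReal (u x ^ 2))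
            + ∫⁻ x in Ioo A B, ENNReal.ofReal (u x ^ 2))
          + ENNReal.ofReal (3 * h) * halfSemi u' (Ioo A B) := by
        gcongr _ * (?_ + ?_) + _ * ?_
        · exact setLIntegral_comp_add_right_le (f := fun y => ENNReal.ofReal (u y ^ 2)) hl
        · exact setLIntegral_comp_add_right_le (f := fun y => ENNReal.ofReal (u y ^ 2)) hr
    _ = _ := by
        rw [← two_mul, ← mul_assoc, ← ENNReal.ofReal_ofNat 2,
          ← ENNReal.ofReal_mul (by positivity)]
        ring_nf

theorem lintegral_sq_deriv_le {A B h : ℝ} {u u' : ℝ → ℝ} (hu : IsPrimitiveOn (Ioo A B) u u')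
    (hum : AEMeasurable u (volume.restrict (Ioo A B)))
    (hu'm : AEMeasurable u' (volume.restrict (Ioo A B))) (hh : 0 < h) (h2h : 2 * h < B - A) :
    ∫⁻ x in Ioo A B, ENNReal.ofReal (u' x ^ 2)
      ≤ ENNReal.ofReal (12 / h ^ 2) * (∫⁻ x in Ioo A B, ENNReal.ofReal (u x ^ 2))
        + ENNReal.ofReal (6 * h) * halfSemi u' (Ioo A B) := by
  have hfwd := lintegral_sq_deriv_le_of_windows (s := Ioo A (B - h)) (c := 0) hu hum hu'm hh
    ⟨by linarith, le_rfl⟩ measurableSet_Ioo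
    (fun x hx => by constructor <;> dsimp only <;> linarith [hx.1, hx.2])
    (fun x hx => by constructor <;> dsimp only <;> linarith [hx.1, hx.2])
  have hbwd := lintegral_sq_deriv_le_of_windows (s := Ico (B - h) B) (c := -h) hu hum hu'm hh
    ⟨le_rfl, by linarith⟩ measurableSet_Ico
    (fun x hx => by constructor <;> dsimp only <;> linarith [hx.1, hx.2])
    (fun x hx => by constructor <;> dsimp only <;> linarith [hx.1, hx.2])
  calc ∫⁻ x in Ioo A B, ENNReal.ofReal (u' x ^ 2)
      = ∫⁻ x in Ioo A (B - h) ∪ Ico (B - h) B, ENNReal.ofReal (u' x ^ 2) := by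
        rw [Ioo_union_Ico_eq_Ioo (by linarith) (by linarith)]
    _ ≤ _ := lintegral_union_le _ _ _
    _ ≤ _ := add_le_add hfwd hbwd
    _ = _ := by
        rw [← two_mul, mul_add, ← mul_assoc, ← mul_assoc, ← ENNReal.ofReal_ofNat 2,
          ← ENNReal.ofReal_mul (by positivity), ← ENNReal.ofReal_mul (by positivity)]
        ring_nf

theorem integral_sq_deriv_le {A B h : ℝ} {u u' : ℝ → ℝ} (hu : IsPrimitiveOn (Ioo A B) u u')
    (hu2 : MemLp u 2 (volume.restrict (Ioo A B))) (hu'2 : MemLp u' 2 (volume.restrict (Ioo A B)))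
    (hfin : halfSemi u' (Ioo A B) ≠ ⊤) (hh : 0 < h) (h2h : 2 * h < B - A) :
    ∫ x in Ioo A B, u' x ^ 2
      ≤ 12 / h ^ 2 * (∫ x in Ioo A B, u x ^ 2) + 6 * h * (halfSemi u' (Ioo A B)).toReal := by
  have hX : 0 ≤ ∫ x in Ioo A B, u x ^ 2 := integral_nonneg fun x => sq_nonneg _
  have hb := lintegral_sq_deriv_le hu hu2.aestronglyMeasurable.aemeasurable
    hu'2.aestronglyMeasurable.aemeasurable hh h2h
  rw [← ofReal_integral_eq_lintegral_ofReal hu2.integrable_sq (ae_of_all _ fun x => sq_nonneg _),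
    ← ENNReal.ofReal_toReal hfin, ← ENNReal.ofReal_mul (by positivity),
    ← ENNReal.ofReal_mul (by positivity), ← ENNReal.ofReal_add (by positivity) (by positivity)]
    at hb
  rw [integral_eq_lintegral_of_nonneg_ae (ae_of_all _ fun x => sq_nonneg _)
    (hu'2.aestronglyMeasurable.pow 2)]
  exact ENNReal.toReal_le_of_le_ofReal (by positivity) hb

theorem le_of_forall_le_div_sq_add_mul {X S Y h₀ : ℝ} (hh₀ : 0 < h₀) (hX : 0 ≤ X) (hS : 0 ≤ S)
    (hY : ∀ h, 0 < h → h ≤ h₀ → Y ≤ 12 / h ^ 2 * X + 6 * h * S) :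
    Y ≤ 18 * (X ^ ((1:ℝ) / 6) * S ^ ((1:ℝ) / 3)) ^ 2 + 18 / h₀ ^ 2 * X := by
  set a := X ^ ((1:ℝ) / 6)
  set b := S ^ ((1:ℝ) / 3)
  have ha : 0 ≤ a := by positivity
  have hb : 0 ≤ b := by positivity
  have ha6 : a ^ 6 = X := by
    simp only [a, one_div]; exact_mod_cast Real.rpow_inv_natCast_pow hX (by norm_num : (6:ℕ) ≠ 0)
  have hb3 : b ^ 3 = S := by
    simp only [b, one_div]; exact_mod_cast Real.rpow_inv_natCast_pow hS (by norm_num : (3:ℕ) ≠ 0)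
  rcases ha.eq_or_lt with ha0 | ha0
  · -- letting `h → 0` in `Y ≤ 6 h S` gives `Y ≤ 0`
    have hX0 : X = 0 := by rw [← ha6, ← ha0]; norm_num
    have hlim : Tendsto (fun h : ℝ => 6 * h * S) (𝓝[>] 0) (𝓝 0) := by
      have : Continuous fun h : ℝ => 6 * h * S := by fun_prop
      simpa using (this.tendsto 0).mono_left nhdsWithin_le_nhds
    have hY0 : Y ≤ 0 := ge_of_tendsto hlim <| by
      filter_upwards [Ioo_mem_nhdsGT hh₀] with h hh
      simpa [hX0] using hY h hh.1 hh.2.le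
    rw [← ha0, hX0]; simpa using hY0
  rcases le_or_gt (a ^ 2) (b * h₀) with hsmall | hlarge
  · -- the balancing step `h = a² / b = (X / S)^{1/3}`
    have hb0 : 0 < b := by nlinarith
    have h := hY (a ^ 2 / b) (by positivity) ((div_le_iff₀' hb0).2 hsmall)
    rw [← ha6, ← hb3] at h; rw [← ha6]
    have e : 12 / (a ^ 2 / b) ^ 2 * a ^ 6 + 6 * (a ^ 2 / b) * b ^ 3 = 18 * (a * b) ^ 2 := by
      field_simp; ring
    have : 0 ≤ 18 / h₀ ^ 2 * a ^ 6 := by positivity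
    linarith
  · have h := hY h₀ hh₀ le_rfl
    rw [← ha6, ← hb3] at h; rw [← ha6]
    have hcube : (b * h₀) ^ 3 ≤ (a ^ 2) ^ 3 := by gcongr
    have e : 6 * h₀ * b ^ 3 ≤ 6 / h₀ ^ 2 * a ^ 6 := by
      rw [div_mul_eq_mul_div, le_div_iff₀ (by positivity)]; nlinarith
    have : 0 ≤ 18 * (a * b) ^ 2 := by positivity
    have e2 : 12 / h₀ ^ 2 * a ^ 6 + 6 / h₀ ^ 2 * a ^ 6 = 18 / h₀ ^ 2 * a ^ 6 := by ring
    linarith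

/-- **Proposition 2.5, Gagliardo–Nirenberg-type inequality.**
For a bounded open interval `J = (A,B)` there is `C = C(J) > 0` such that
`‖u‖_{H¹(J)} ≤ C(‖u‖_{L²(J)}^{1/3}·|u'|_{H^{1/2}(J)}^{2/3} + ‖u‖_{L²(J)})` for every
`u ∈ H^{3/2}(J)`.  (Here `halfSemi u' J` is the squared `H^{1/2}` seminorm, so its
`1/3`-power is the `2/3`-power of the seminorm.) -/
theorem gagliardo_nirenberg_type (A B : ℝ) (hAB : A < B) :
    ∃ C > (0:ℝ), ∀ u u' : ℝ → ℝ,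
      (∀ s ∈ Ioo A B, ∀ t ∈ Ioo A B, IntervalIntegrable u' volume s t ∧
        u t - u s = ∫ x in s..t, u' x) →
      MemLp u 2 (volume.restrict (Ioo A B)) →
      MemLp u' 2 (volume.restrict (Ioo A B)) →
      halfSemi u' (Ioo A B) ≠ ⊤ →
      Real.sqrt ((∫ x in Ioo A B, u x ^ 2) + ∫ x in Ioo A B, u' x ^ 2)
        ≤ C * ((∫ x in Ioo A B, u x ^ 2) ^ ((1:ℝ) / 6)
                * (halfSemi u' (Ioo A B)).toReal ^ ((1:ℝ) / 3)
               + Real.sqrt (∫ x in Ioo A B, u x ^ 2)) := by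
  have hL : 0 < B - A := by linarith
  refine ⟨√18 * (1 + 3 / (B - A)), by positivity, fun u u' hu hu2 hu'2 hfin => ?_⟩
  set X := ∫ x in Ioo A B, u x ^ 2
  set E := X ^ ((1:ℝ) / 6) * (halfSemi u' (Ioo A B)).toReal ^ ((1:ℝ) / 3)
  have hX : 0 ≤ X := integral_nonneg fun x => sq_nonneg _
  have hY := le_of_forall_le_div_sq_add_mul (h₀ := (B - A) / 3) (by positivity) hX
    ENNReal.toReal_nonneg fun h hh hh₀ => integral_sq_deriv_le hu hu2 hu'2 hfin hh (by linarith)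
  have hXk : 18 / ((B - A) / 3) ^ 2 * X = 18 * (3 / (B - A) * √X) ^ 2 := by
    rw [mul_pow, Real.sq_sqrt hX]; field_simp
  set k := 3 / (B - A)
  have hE : 0 ≤ E := by positivity
  have hk : 0 ≤ k := by positivity
  have hR := Real.sqrt_nonneg X
  calc √(X + ∫ x in Ioo A B, u' x ^ 2)
      ≤ √((√18 * ((1 + k) * (E + √X))) ^ 2) := by
        refine Real.sqrt_le_sqrt ?_
        rw [mul_pow, Real.sq_sqrt (by norm_num)]
        nlinarith [Real.sq_sqrt hX, mul_nonneg hk hE, mul_nonneg hk hR, mul_nonneg hE hR,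
          mul_nonneg (mul_nonneg hk hE) hR, mul_nonneg (mul_nonneg hk hk) (mul_nonneg hE hR)]
    _ = √18 * (1 + k) * (E + √X) := by rw [Real.sqrt_sq (by positivity), mul_assoc]

end
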